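/- arXiv:1509.00500 — 3 statements merged into one kernel-verified Lean document; each statement's English description precedes it below -/
import Mathlib

section
/- Let 1 ≤ s ≤ p/2 and m ≥ s with s + m ≤ p, and suppose m·λ_min(s+m) > (μC_σ)²·s·λ_max(m) for some μ > 1 and C_σ > 0. Then ϑ(s,m,μ,C_σ) ≥ λ_min(s+m)·(1 − μC_σ √(s·λ_max(m)) / √(m·λ_min(s+m)))² > 0. -/
/-!
Cut the entries of `d` outside `J`, sorted by absolute value, into blocks of size `m`. Every
entry of a block is at most the average absolute value of the previous block, so the part `w`
of `d` beyond the first block satisfies `√(wᵀΦw) ≤ √λ_max(m) ‖d_{Jᶜ}‖₁ / √m`, while `d - w`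
is `(s+m)`-sparse, whence `√λ_min(s+m) ‖d_J‖₂ ≤ √((d-w)ᵀΦ(d-w))`. On `D(μ, J)` with
`J ∈ G(C_σ)`, comparing with the smallest weight outside `J` gives
`‖d_{Jᶜ}‖₁ ≤ μ C_σ ‖d_J‖₁ ≤ μ C_σ √s ‖d_J‖₂`, and the triangle inequality for the seminorm
`t ↦ √(tᵀΦt)` combines the two bounds.
-/

open scoped BigOperators

noncomputable section

/-- The quadratic form `t ↦ tᵀ Φ t`. -/
noncomputable def qf {p : ℕ} (Φ : Matrix (Fin p) (Fin p) ℝ) (t : Fin p → ℝ) : ℝ :=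
  dotProduct t (Φ.mulVec t)

/-- The `ℓ⁰` norm: number of nonzero coordinates. -/
noncomputable def l0norm {p : ℕ} (t : Fin p → ℝ) : ℕ :=
  (Finset.univ.filter fun j => t j ≠ 0).card

/-- Minimum restricted eigenvalue `λ_min(m)` of `Φ`. -/
noncomputable def lamMin {p : ℕ} (Φ : Matrix (Fin p) (Fin p) ℝ) (m : ℕ) : ℝ :=
  sInf ((fun t => qf Φ t / ∑ j, t j ^ 2) '' {t : Fin p → ℝ | t ≠ 0 ∧ l0norm t ≤ m})

/-- Maximum restricted eigenvalue `λ_max(m)` of `Φ`. -/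
noncomputable def lamMax {p : ℕ} (Φ : Matrix (Fin p) (Fin p) ℝ) (m : ℕ) : ℝ :=
  sSup ((fun t => qf Φ t / ∑ j, t j ^ 2) '' {t : Fin p → ℝ | t ≠ 0 ∧ l0norm t ≤ m})

/-- The cone `D(μ, J) = {d : ‖(Υd)_{J^c}‖₁ ≤ μ ‖(Υd)_J‖₁}`. -/
def Dset {p : ℕ} (σ : Fin p → ℝ) (μ : ℝ) (J : Finset (Fin p)) : Set (Fin p → ℝ) :=
  {d | ∑ j ∈ Jᶜ, σ j * |d j| ≤ μ * ∑ j ∈ J, σ j * |d j|}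

/-- The collection `G(C_σ)` of index sets `J` with `σ_j ≤ C_σ σ_{j'}` for `j ∈ J`, `j' ∉ J`. -/
def Gset {p : ℕ} (σ : Fin p → ℝ) (Cσ : ℝ) : Set (Finset (Fin p)) :=
  {J | ∀ j ∈ J, ∀ j' ∉ J, σ j ≤ Cσ * σ j'}

open Finset Matrix

open scoped MatrixOrder in
theorem Matrix.PosSemidef.exists_eq_transpose_mul_self {n : Type*} [Fintype n] [DecidableEq n]
    {A : Matrix n n ℝ} (hA : A.PosSemidef) : ∃ B : Matrix n n ℝ, A = Bᵀ * B := by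
  refine ⟨CFC.sqrt A, ?_⟩
  have hsymm : (CFC.sqrt A)ᵀ = CFC.sqrt A := by
    simpa using (CFC.sqrt_nonneg A).isHermitian.eq
  rw [hsymm, CFC.sqrt_mul_sqrt_self A hA.nonneg]

section QuadraticForm

variable {p : ℕ} {Φ : Matrix (Fin p) (Fin p) ℝ}

theorem qf_transpose_mul_self {n : Type*} [Fintype n] (B : Matrix n (Fin p) ℝ) (t : Fin p → ℝ) :
    qf (Bᵀ * B) t = ‖WithLp.toLp 2 (B *ᵥ t)‖ ^ 2 := by
  rw [qf, ← mulVec_mulVec, dotProduct_mulVec, vecMul_transpose, EuclideanSpace.real_norm_sq_eq]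
  simp [dotProduct, sq]

theorem qf_nonneg (hΦ : Φ.PosSemidef) (t : Fin p → ℝ) : 0 ≤ qf Φ t := by
  simpa [qf] using hΦ.dotProduct_mulVec_nonneg t

theorem qf_zero (Φ : Matrix (Fin p) (Fin p) ℝ) : qf Φ 0 = 0 := by
  simp [qf]

theorem exists_sqrt_qf_eq_norm (hΦ : Φ.PosSemidef) :
    ∃ B : Matrix (Fin p) (Fin p) ℝ, ∀ t, √(qf Φ t) = ‖WithLp.toLp 2 (B *ᵥ t)‖ := by
  obtain ⟨B, rfl⟩ := hΦ.exists_eq_transpose_mul_self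
  exact ⟨B, fun t => by rw [qf_transpose_mul_self B t, Real.sqrt_sq (norm_nonneg _)]⟩

theorem sqrt_qf_add_le (hΦ : Φ.PosSemidef) (a b : Fin p → ℝ) :
    √(qf Φ (a + b)) ≤ √(qf Φ a) + √(qf Φ b) := by
  obtain ⟨B, hB⟩ := exists_sqrt_qf_eq_norm hΦ
  simpa only [hB, mulVec_add, WithLp.toLp_add] using norm_add_le _ _

theorem sqrt_qf_sub_le (hΦ : Φ.PosSemidef) (a b : Fin p → ℝ) :
    √(qf Φ (a - b)) ≤ √(qf Φ a) + √(qf Φ b) := by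
  obtain ⟨B, hB⟩ := exists_sqrt_qf_eq_norm hΦ
  simpa only [hB, mulVec_sub, WithLp.toLp_sub] using norm_sub_le _ _

end QuadraticForm

section RestrictedEigenvalues

variable {p : ℕ} {Φ : Matrix (Fin p) (Fin p) ℝ}

theorem sum_sq_pos_of_ne_zero {t : Fin p → ℝ} (ht : t ≠ 0) : 0 < ∑ j, t j ^ 2 := by
  obtain ⟨j, hj⟩ := Function.ne_iff.mp ht
  exact sum_pos' (fun _ _ => sq_nonneg _) ⟨j, mem_univ j, sq_pos_of_ne_zero hj⟩

theorem l0norm_le_card {t : Fin p → ℝ} {T : Finset (Fin p)} (ht : ∀ j ∉ T, t j = 0) :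
    l0norm t ≤ #T :=
  card_le_card fun j hj => by_contra fun hjT => (mem_filter.mp hj).2 (ht j hjT)

theorem bddAbove_rayleigh (Φ : Matrix (Fin p) (Fin p) ℝ) (k : ℕ) :
    BddAbove ((fun t => qf Φ t / ∑ j, t j ^ 2) '' {t : Fin p → ℝ | t ≠ 0 ∧ l0norm t ≤ k}) := by
  refine ⟨∑ i, ∑ j, |Φ i j|, ?_⟩
  rintro _ ⟨t, ⟨ht, -⟩, rfl⟩
  rw [div_le_iff₀ (sum_sq_pos_of_ne_zero ht), sum_mul]
  have hterm (i j : Fin p) : t i * (Φ i j * t j) ≤ |Φ i j| * ∑ k, t k ^ 2 := by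
    have hi := single_le_sum (fun k _ => sq_nonneg (t k)) (mem_univ i)
    have hj := single_le_sum (fun k _ => sq_nonneg (t k)) (mem_univ j)
    have : |t i| * |t j| ≤ ∑ k, t k ^ 2 := by
      nlinarith [sq_nonneg (|t i| - |t j|), sq_abs (t i), sq_abs (t j)]
    calc t i * (Φ i j * t j) ≤ |Φ i j| * (|t i| * |t j|) := by
          rw [← abs_mul, ← abs_mul, mul_left_comm]; exact le_abs_self _
      _ ≤ |Φ i j| * ∑ k, t k ^ 2 := by gcongr
  calc qf Φ t = ∑ i, ∑ j, t i * (Φ i j * t j) := by simp [qf, dotProduct, mulVec, mul_sum]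
    _ ≤ ∑ i, ∑ j, |Φ i j| * ∑ k, t k ^ 2 := sum_le_sum fun i _ => sum_le_sum fun j _ => hterm i j
    _ = _ := by simp only [sum_mul]

theorem zero_mem_lowerBounds_rayleigh (hΦ : Φ.PosSemidef) (k : ℕ) :
    0 ∈ lowerBounds
      ((fun t => qf Φ t / ∑ j, t j ^ 2) '' {t : Fin p → ℝ | t ≠ 0 ∧ l0norm t ≤ k}) := by
  rintro _ ⟨t, -, rfl⟩
  exact div_nonneg (qf_nonneg hΦ t) (by positivity)

theorem lamMax_nonneg (hΦ : Φ.PosSemidef) (k : ℕ) : 0 ≤ lamMax Φ k :=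
  Real.sSup_nonneg (zero_mem_lowerBounds_rayleigh hΦ k)

theorem lamMin_nonneg (hΦ : Φ.PosSemidef) (k : ℕ) : 0 ≤ lamMin Φ k :=
  Real.sInf_nonneg (zero_mem_lowerBounds_rayleigh hΦ k)

theorem qf_le_lamMax_mul {k : ℕ} {t : Fin p → ℝ} (ht : l0norm t ≤ k) :
    qf Φ t ≤ lamMax Φ k * ∑ j, t j ^ 2 := by
  rcases eq_or_ne t 0 with rfl | ht0
  · simp [qf_zero]
  rw [← div_le_iff₀ (sum_sq_pos_of_ne_zero ht0)]
  exact le_csSup (bddAbove_rayleigh Φ k) ⟨t, ⟨ht0, ht⟩, rfl⟩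

theorem lamMin_mul_le_qf (hΦ : Φ.PosSemidef) {k : ℕ} {t : Fin p → ℝ} (ht : l0norm t ≤ k) :
    lamMin Φ k * ∑ j, t j ^ 2 ≤ qf Φ t := by
  rcases eq_or_ne t 0 with rfl | ht0
  · simp [qf_zero]
  rw [← le_div_iff₀ (sum_sq_pos_of_ne_zero ht0)]
  exact csInf_le ⟨0, zero_mem_lowerBounds_rayleigh hΦ k⟩ ⟨t, ⟨ht0, ht⟩, rfl⟩

end RestrictedEigenvalues

theorem Finset.exists_subset_card_eq_forall_le {ι α : Type*} [DecidableEq ι] [LinearOrder α]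
    (f : ι → α) {k : ℕ} {T : Finset ι} (hk : k ≤ #T) :
    ∃ S ⊆ T, #S = k ∧ ∀ i ∈ S, ∀ j ∈ T \ S, f j ≤ f i := by
  induction k generalizing T with
  | zero => exact ⟨∅, empty_subset T, rfl, by simp⟩
  | succ k ih =>
    obtain ⟨t, htT, htmax⟩ := T.exists_max_image f (card_pos.mp (by omega))
    obtain ⟨S, hST, hS, htop⟩ := ih (T := T.erase t) (by rw [card_erase_of_mem htT]; omega)
    have htS : t ∉ S := fun h => (mem_erase.mp (hST h)).1 rfl
    refine ⟨insert t S, insert_subset htT (hST.trans (erase_subset t T)), by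
      rw [card_insert_of_notMem htS, hS], ?_⟩
    intro i hi j hj
    obtain ⟨hjT, hjS⟩ := mem_sdiff.mp hj
    rcases mem_insert.mp hi with rfl | hi
    · exact htmax j hjT
    · exact htop i hi j (mem_sdiff.mpr
        ⟨mem_erase.mpr ⟨fun h => hjS (h ▸ mem_insert_self _ _), hjT⟩,
          fun h => hjS (mem_insert_of_mem h)⟩)

theorem sum_abs_le_sqrt_card_mul_sqrt_sum_sq {ι : Type*} (J : Finset ι) (d : ι → ℝ) :
    ∑ j ∈ J, |d j| ≤ √(#J : ℝ) * √(∑ j ∈ J, d j ^ 2) := by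
  rw [← Real.sqrt_mul (Nat.cast_nonneg _), Real.le_sqrt (sum_nonneg fun _ _ => abs_nonneg _)
    (by positivity)]
  simpa [sq_abs] using sq_sum_le_card_mul_sum_sq (s := J) (f := fun j => |d j|)

section TailBound

variable {p : ℕ} {Φ : Matrix (Fin p) (Fin p) ℝ}

theorem sqrt_qf_indicator_le (hΦ : Φ.PosSemidef) {m : ℕ} {T : Finset (Fin p)} (hT : #T ≤ m)
    {v : Fin p → ℝ} {b : ℝ} (hb0 : 0 ≤ b) (hb : ∀ j ∈ T, |v j| ≤ b) :
    √(qf Φ ((T : Set (Fin p)).indicator v)) ≤ √(lamMax Φ m) * (√m * b) := by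
  have hsupp : l0norm ((T : Set (Fin p)).indicator v) ≤ m :=
    (l0norm_le_card fun j hj => Set.indicator_of_notMem (mem_coe.not.mpr hj) v).trans hT
  have hsum : ∑ j, (T : Set (Fin p)).indicator v j ^ 2 ≤ m * b ^ 2 :=
    calc ∑ j, (T : Set (Fin p)).indicator v j ^ 2 = ∑ j ∈ T, v j ^ 2 := by
          rw [← sum_subset (subset_univ T) fun j _ hj => by
            simp [Set.indicator_of_notMem (mem_coe.not.mpr hj)]]
          exact sum_congr rfl fun j hj => by rw [Set.indicator_of_mem (mem_coe.mpr hj)]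
      _ ≤ ∑ _j ∈ T, b ^ 2 := sum_le_sum fun j hj => by
          rw [← sq_abs]; exact pow_le_pow_left₀ (abs_nonneg _) (hb j hj) 2
      _ ≤ m * b ^ 2 := by rw [sum_const, nsmul_eq_mul]; gcongr
  calc √(qf Φ ((T : Set (Fin p)).indicator v)) ≤ √(lamMax Φ m * (m * b ^ 2)) :=
        Real.sqrt_le_sqrt ((qf_le_lamMax_mul hsupp).trans
          (mul_le_mul_of_nonneg_left hsum (lamMax_nonneg hΦ m)))
    _ = √(lamMax Φ m) * (√m * b) := by
        rw [Real.sqrt_mul' _ (by positivity), Real.sqrt_mul' _ (sq_nonneg b), Real.sqrt_sq hb0]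

theorem exists_sqrt_qf_indicator_sdiff_le (hΦ : Φ.PosSemidef) {m : ℕ} (hm : 0 < m)
    (v : Fin p → ℝ) (T : Finset (Fin p)) :
    ∃ S ⊆ T, #S ≤ m ∧ √(qf Φ ((↑(T \ S) : Set (Fin p)).indicator v)) ≤
      √(lamMax Φ m) * ((∑ j ∈ T, |v j|) / √m) := by
  induction T using Finset.strongInduction with
  | H T ih =>
  rcases le_or_gt #T m with hT | hT
  · refine ⟨T, subset_rfl, hT, ?_⟩
    rw [sdiff_self, bot_eq_empty, coe_empty, Set.indicator_empty', qf_zero, Real.sqrt_zero]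
    positivity
  obtain ⟨S, hST, hS, htop⟩ := exists_subset_card_eq_forall_le (fun j => |v j|) hT.le
  have hSne : S.Nonempty := card_pos.mp (hS ▸ hm)
  obtain ⟨i₀, hi₀, hmin⟩ := S.exists_min_image (fun j => |v j|) hSne
  obtain ⟨S', hS'T, hS', hrest⟩ := ih (T \ S) (sdiff_ssubset hST hSne)
  refine ⟨S, hST, hS.le, ?_⟩
  have hsplit : (↑(T \ S) : Set (Fin p)).indicator v =
      (S' : Set (Fin p)).indicator v + (↑((T \ S) \ S') : Set (Fin p)).indicator v := by
    conv_lhs => rw [← union_sdiff_of_subset hS'T, coe_union,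
      Set.indicator_union_of_disjoint (disjoint_coe.mpr disjoint_sdiff)]
    rfl
  have hhead := sqrt_qf_indicator_le hΦ hS' (abs_nonneg (v i₀)) fun j hj =>
    htop i₀ hi₀ j (hS'T hj)
  have hm_mul : (m : ℝ) * |v i₀| ≤ ∑ j ∈ S, |v j| := by
    simpa [hS] using card_nsmul_le_sum S (fun j => |v j|) _ hmin
  have hsqrt_mul : √m * |v i₀| ≤ (∑ j ∈ S, |v j|) / √m := by
    rwa [le_div_iff₀ (by positivity), mul_right_comm, Real.mul_self_sqrt (Nat.cast_nonneg _)]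
  calc √(qf Φ ((↑(T \ S) : Set (Fin p)).indicator v))
      ≤ √(lamMax Φ m) * (√m * |v i₀|) + √(lamMax Φ m) * ((∑ j ∈ T \ S, |v j|) / √m) :=
        hsplit ▸ (sqrt_qf_add_le hΦ _ _).trans (add_le_add hhead hrest)
    _ ≤ √(lamMax Φ m) * ((∑ j ∈ S, |v j|) / √m) +
          √(lamMax Φ m) * ((∑ j ∈ T \ S, |v j|) / √m) := by gcongr
    _ = √(lamMax Φ m) * ((∑ j ∈ T, |v j|) / √m) := by
        rw [← mul_add, ← add_div, add_comm, sum_sdiff hST]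

end TailBound

section ConeBound

variable {p : ℕ} {Φ : Matrix (Fin p) (Fin p) ℝ}

theorem sqrt_lamMin_mul_le_sqrt_qf_add (hΦ : Φ.PosSemidef) {s m : ℕ} (hm : 0 < m)
    {J : Finset (Fin p)} (hJ : #J ≤ s) (d : Fin p → ℝ) :
    √(lamMin Φ (s + m)) * √(∑ j ∈ J, d j ^ 2) ≤
      √(qf Φ d) + √(lamMax Φ m) * ((∑ j ∈ Jᶜ, |d j|) / √m) := by
  obtain ⟨S, hSJ, hS, htail⟩ := exists_sqrt_qf_indicator_sdiff_le hΦ hm d Jᶜ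
  set w := (↑(Jᶜ \ S) : Set (Fin p)).indicator d
  have hw_of_mem (j : Fin p) (hj : j ∈ J) : w j = 0 :=
    Set.indicator_of_notMem (by simp [hj]) d
  have hsupp : l0norm (d - w) ≤ s + m := by
    refine (l0norm_le_card (T := J ∪ S) fun j hj => ?_).trans
      ((card_union_le _ _).trans (by omega))
    have hj' : j ∈ (↑(Jᶜ \ S) : Set (Fin p)) := by simpa using hj
    exact sub_eq_zero.mpr (Set.indicator_of_mem hj' d).symm
  have hJ_le : ∑ j ∈ J, d j ^ 2 ≤ ∑ j, (d - w) j ^ 2 :=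
    calc ∑ j ∈ J, d j ^ 2 = ∑ j ∈ J, (d - w) j ^ 2 :=
          sum_congr rfl fun j hj => by simp [hw_of_mem j hj]
      _ ≤ ∑ j, (d - w) j ^ 2 :=
          sum_le_sum_of_subset_of_nonneg (subset_univ J) fun _ _ _ => sq_nonneg _
  calc √(lamMin Φ (s + m)) * √(∑ j ∈ J, d j ^ 2) = √(lamMin Φ (s + m) * ∑ j ∈ J, d j ^ 2) :=
        (Real.sqrt_mul (lamMin_nonneg hΦ _) _).symm
    _ ≤ √(qf Φ (d - w)) := Real.sqrt_le_sqrt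
        ((mul_le_mul_of_nonneg_left hJ_le (lamMin_nonneg hΦ _)).trans (lamMin_mul_le_qf hΦ hsupp))
    _ ≤ √(qf Φ d) + √(qf Φ w) := sqrt_qf_sub_le hΦ d w
    _ ≤ _ := by gcongr

theorem sub_mul_sqrt_sum_sq_le_sqrt_qf (hΦ : Φ.PosSemidef) {s m : ℕ} (hm : 0 < m)
    {J : Finset (Fin p)} (hJ : #J ≤ s) {d : Fin p → ℝ} {L : ℝ} (hL : 0 ≤ L)
    (hcone : ∑ j ∈ Jᶜ, |d j| ≤ L * ∑ j ∈ J, |d j|) :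
    (√(lamMin Φ (s + m)) - L * √(s * lamMax Φ m) / √m) * √(∑ j ∈ J, d j ^ 2) ≤ √(qf Φ d) := by
  have hl1 : ∑ j ∈ Jᶜ, |d j| ≤ L * (√s * √(∑ j ∈ J, d j ^ 2)) := by
    refine hcone.trans (mul_le_mul_of_nonneg_left
      ((sum_abs_le_sqrt_card_mul_sqrt_sum_sq J d).trans ?_) hL)
    gcongr
  have htail : √(lamMax Φ m) * ((∑ j ∈ Jᶜ, |d j|) / √m) ≤
      L * √(s * lamMax Φ m) / √m * √(∑ j ∈ J, d j ^ 2) :=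
    calc √(lamMax Φ m) * ((∑ j ∈ Jᶜ, |d j|) / √m)
        ≤ √(lamMax Φ m) * (L * (√s * √(∑ j ∈ J, d j ^ 2)) / √m) := by gcongr
      _ = _ := by rw [Real.sqrt_mul (Nat.cast_nonneg s)]; ring
  linarith [sqrt_lamMin_mul_le_sqrt_qf_add hΦ hm hJ d]

end ConeBound

section WeightedCone

variable {p : ℕ} {σ : Fin p → ℝ} {μ Cσ : ℝ} {J : Finset (Fin p)} {d : Fin p → ℝ}

theorem sum_compl_abs_le_of_mem_Dset (hσ : ∀ j, 0 < σ j) (hμ : 0 ≤ μ) (hCσ : 0 ≤ Cσ)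
    (hJ : J ∈ Gset σ Cσ) (hd : d ∈ Dset σ μ J) :
    ∑ j ∈ Jᶜ, |d j| ≤ μ * Cσ * ∑ j ∈ J, |d j| := by
  rcases Jᶜ.eq_empty_or_nonempty with hJc | hJc
  · rw [hJc, sum_empty]
    positivity
  obtain ⟨j₀, hj₀, hmin⟩ := Jᶜ.exists_min_image σ hJc
  refine le_of_mul_le_mul_left ?_ (hσ j₀)
  calc σ j₀ * ∑ j ∈ Jᶜ, |d j| ≤ ∑ j ∈ Jᶜ, σ j * |d j| := by
        rw [mul_sum]
        gcongr with j hj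
        exact hmin j hj
    _ ≤ μ * ∑ j ∈ J, σ j * |d j| := hd
    _ ≤ μ * ∑ j ∈ J, Cσ * σ j₀ * |d j| := by
        gcongr with j hj
        exact hJ j hj j₀ (mem_compl.mp hj₀)
    _ = σ j₀ * (μ * Cσ * ∑ j ∈ J, |d j|) := by
        rw [← mul_sum]
        ring

theorem sum_sq_pos_of_sum_compl_abs_le {L : ℝ} (hd : d ≠ 0)
    (hcone : ∑ j ∈ Jᶜ, |d j| ≤ L * ∑ j ∈ J, |d j|) : 0 < ∑ j ∈ J, d j ^ 2 := by
  by_contra! hJ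
  have hJ_zero : ∀ j ∈ J, d j = 0 := fun j hj => pow_eq_zero_iff two_ne_zero |>.mp <|
    (sum_eq_zero_iff_of_nonneg fun _ _ => sq_nonneg _).mp
      (hJ.antisymm (sum_nonneg fun _ _ => sq_nonneg _)) j hj
  have hJ_abs : ∑ j ∈ J, |d j| = 0 := sum_eq_zero fun j hj => by rw [hJ_zero j hj, abs_zero]
  rw [hJ_abs, mul_zero] at hcone
  have hJc_zero : ∀ j ∈ Jᶜ, |d j| = 0 :=
    (sum_eq_zero_iff_of_nonneg fun _ _ => abs_nonneg _).mp
      (hcone.antisymm (sum_nonneg fun _ _ => abs_nonneg _))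
  refine hd (funext fun j => ?_)
  by_cases hj : j ∈ J
  · exact hJ_zero j hj
  · exact abs_eq_zero.mp (hJc_zero j (mem_compl.mpr hj))

end WeightedCone

theorem mul_one_sub_div_sqrt_mul_sq {x y a : ℝ} (hx : 0 < x) (hy : 0 < y) :
    x * (1 - a / √(y * x)) ^ 2 = (√x - a / √y) ^ 2 := by
  have hsx : 0 < √x := Real.sqrt_pos.mpr hx
  have hsy : 0 < √y := Real.sqrt_pos.mpr hy
  rw [Real.sqrt_mul hy.le]
  nth_rewrite 1 [← Real.sq_sqrt hx.le]
  field_simp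

theorem vth_lower_bound_general
    (p : ℕ) (Φ : Matrix (Fin p) (Fin p) ℝ) (hΦ : Φ.PosSemidef)
    (σ : Fin p → ℝ) (hσpos : ∀ j, 0 < σ j)
    (s m : ℕ)
    (μ Cσ : ℝ) (hμ : 1 < μ) (hCσ : 0 < Cσ)
    (hA1 : (μ * Cσ) ^ 2 * s * lamMax Φ m < m * lamMin Φ (s + m)) :
    0 < lamMin Φ (s + m) *
        (1 - μ * Cσ * Real.sqrt (s * lamMax Φ m) / Real.sqrt (m * lamMin Φ (s + m))) ^ 2 ∧
    ∀ J ∈ Gset σ Cσ, J.card ≤ s → ∀ d ∈ Dset σ μ J, d ≠ 0 →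
      lamMin Φ (s + m) *
          (1 - μ * Cσ * Real.sqrt (s * lamMax Φ m) / Real.sqrt (m * lamMin Φ (s + m))) ^ 2
        ≤ qf Φ d / ∑ j ∈ J, d j ^ 2 := by
  have hlamMax := lamMax_nonneg hΦ m
  have hA1_nonneg : 0 ≤ (μ * Cσ) ^ 2 * s * lamMax Φ m := by positivity
  have hm : 0 < m := by
    rcases Nat.eq_zero_or_pos m with rfl | hm
    · rw [Nat.cast_zero, zero_mul] at hA1
      linarith
    · exact hm
  have hlamMin : 0 < lamMin Φ (s + m) :=
    pos_of_mul_pos_right (hA1_nonneg.trans_lt hA1) (Nat.cast_nonneg m)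
  have hc : 0 < √(lamMin Φ (s + m)) - μ * Cσ * √(s * lamMax Φ m) / √m := by
    rw [sub_pos, div_lt_iff₀ (by positivity), ← Real.sqrt_mul hlamMin.le,
      Real.lt_sqrt (by positivity), mul_pow, Real.sq_sqrt (by positivity), ← mul_assoc]
    linarith
  rw [mul_one_sub_div_sqrt_mul_sq hlamMin (Nat.cast_pos.mpr hm)]
  refine ⟨pow_pos hc 2, fun J hJ hJs d hd hd0 => ?_⟩
  have hcone := sum_compl_abs_le_of_mem_Dset hσpos (by linarith) hCσ.le hJ hd
  have hJ_pos := sum_sq_pos_of_sum_compl_abs_le hd0 hcone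
  have hkey := sub_mul_sqrt_sum_sq_le_sqrt_qf hΦ hm hJs (by positivity) hcone
  rw [le_div_iff₀ hJ_pos, ← Real.sq_sqrt (qf_nonneg hΦ d), ← Real.sq_sqrt hJ_pos.le, ← mul_pow]
  exact pow_le_pow_left₀ (mul_nonneg hc.le (Real.sqrt_nonneg _)) hkey 2

/-- **Inequality \fr{vartsm}.**  If `m λ_min(s+m) > (μ C_σ)² s λ_max(m)` then
`ϑ(s,m,μ,C_σ) ≥ λ_min(s+m) (1 - μ C_σ √(s λ_max(m)) / √(m λ_min(s+m)))² > 0`,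
i.e. the lower bound is positive and every ratio `dᵀΦd/‖d_J‖₂²` entering the minimum
defining `ϑ(s,m,μ,C_σ)` is at least this lower bound. -/
theorem vth_lower_bound
    (p : ℕ) (Φ : Matrix (Fin p) (Fin p) ℝ) (hΦ : Φ.PosSemidef)
    (σ : Fin p → ℝ) (hσpos : ∀ j, 0 < σ j)
    (s m : ℕ) (hs1 : 1 ≤ s) (hs2 : 2 * s ≤ p) (hsm : s ≤ m) (hsmp : s + m ≤ p)
    (μ Cσ : ℝ) (hμ : 1 < μ) (hCσ : 0 < Cσ)
    (hA1 : (μ * Cσ) ^ 2 * s * lamMax Φ m < m * lamMin Φ (s + m)) :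
    0 < lamMin Φ (s + m) *
        (1 - μ * Cσ * Real.sqrt (s * lamMax Φ m) / Real.sqrt (m * lamMin Φ (s + m))) ^ 2 ∧
    ∀ J ∈ Gset σ Cσ, J.card ≤ s → ∀ d ∈ Dset σ μ J, d ≠ 0 →
      lamMin Φ (s + m) *
          (1 - μ * Cσ * Real.sqrt (s * lamMax Φ m) / Real.sqrt (m * lamMin Φ (s + m))) ^ 2
        ≤ qf Φ d / ∑ j ∈ J, d j ^ 2 :=
  vth_lower_bound_general p Φ hΦ σ hσpos s m μ Cσ hμ hCσ hA1
end
end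

section
/- Suppose n ≥ N0. Then with probability at least 1 − 2p^{−τ}, max_{1≤k≤p} |ξ_k − b_k|/σ_k ≤ (2√((τ+1) log p) + 1)/√n. -/
open MeasureTheory ProbabilityTheory Real
open scoped RealInnerProductSpace BigOperators ENNReal

noncomputable section

/-- `L²((0,∞))`. -/
abbrev Lp2 : Type := Lp ℝ 2 (volume.restrict (Set.Ioi (0:ℝ)))

/-!
This is Bernstein's inequality plus a union bound. For a centred variable `X` with `|X| ≤ M`,
comparing the exponential series termwise with a geometric series (`(j + 2)! ≥ 2 · 3 ^ j`) gives
`E e^{sX} ≤ exp (Var X · s² / (2 (1 - sM/3)))`; Chernoff's bound at the optimal `s` then yields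
`P (∑ Xᵢ ≥ t) ≤ exp (-t² / (2 (V + Mt/3)))`. For each `k` this is applied to the centred variables
`ψ_k(Y_i) - E ψ_k(Y)`, bounded by `2 sup |ψ_k|`, at `t = 2 σ_k √(K n)` with `K = (τ + 1) log p`;
`n ≥ N0` makes both tails at most `e^{-K}`, the bias adds `σ_k / √n`, and summing over the `p`
coordinates costs `2 p e^{-K} = 2 p^{-τ}`.
-/

theorem Real.exp_le_one_add_add_sq_div {y : ℝ} (hy : |y| < 3) :
    exp y ≤ 1 + y + y ^ 2 / (2 * (1 - |y| / 3)) := by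
  have hexp : HasSum (fun n : ℕ => y ^ n / n.factorial) (exp y) := by
    rw [exp_eq_exp_ℝ]; exact NormedSpace.expSeries_div_hasSum_exp y
  have htail : HasSum (fun j : ℕ => y ^ (j + 2) / (j + 2).factorial) (exp y - (1 + y)) := by
    rw [← hasSum_nat_add_iff' 2] at hexp
    simpa [Finset.sum_range_succ] using hexp
  have hgeom : HasSum (fun j : ℕ => y ^ 2 / 2 * (|y| / 3) ^ j) (y ^ 2 / (2 * (1 - |y| / 3))) := by
    have h := (hasSum_geometric_of_lt_one (r := |y| / 3) (by positivity) (by linarith)).mul_left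
      (y ^ 2 / 2)
    rwa [← div_eq_mul_inv, div_div] at h
  have hterm (j : ℕ) : y ^ (j + 2) / (j + 2).factorial ≤ y ^ 2 / 2 * (|y| / 3) ^ j := by
    have hfac : (2 * 3 ^ j : ℝ) ≤ (j + 2).factorial := by
      simpa [add_comm 2 j] using
        (Nat.cast_le (α := ℝ)).2 (Nat.factorial_mul_pow_le_factorial (m := 2) (n := j))
    have hpow : y ^ (j + 2) ≤ y ^ 2 * |y| ^ j := by
      rw [pow_add, mul_comm]
      exact mul_le_mul_of_nonneg_left ((le_abs_self _).trans (abs_pow y j).le) (sq_nonneg y)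
    calc y ^ (j + 2) / (j + 2).factorial ≤ y ^ 2 * |y| ^ j / (2 * 3 ^ j) := by gcongr
      _ = y ^ 2 / 2 * (|y| / 3) ^ j := by rw [div_pow]; ring
  linarith [hasSum_le hterm htail hgeom]

-- The condition `n ≥ N0` is exactly what makes the variance term dominate Bernstein's exponent
-- at the threshold `t = 2σ√(Kn)`.
lemma bernstein_exponent_le_neg {n σ M K : ℝ} (hn : 0 < n) (hσ : 0 < σ) (hM : 0 ≤ M)
    (hK : 0 ≤ K) (hnK : 16 / 9 * K * (M ^ 2 / σ ^ 2) ≤ n) :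
    -(2 * σ * √(K * n)) ^ 2 / (2 * (n * σ ^ 2 + 2 * M * (2 * σ * √(K * n)) / 3)) ≤ -K := by
  set t := 2 * σ * √(K * n) with ht_def
  have ht_sq : t ^ 2 = 4 * σ ^ 2 * (K * n) := by
    rw [ht_def, mul_pow, sq_sqrt (by positivity)]; ring
  have hlinear : 2 * M * t ≤ 3 * (n * σ ^ 2) := by
    have h16 : 16 * K * M ^ 2 ≤ 9 * n * σ ^ 2 := by
      have := hnK; field_simp at this; linarith
    refine (pow_le_pow_iff_left₀ (by positivity) (by positivity) two_ne_zero).mp ?_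
    rw [mul_pow, ht_sq]
    nlinarith [mul_le_mul_of_nonneg_left h16 (by positivity : 0 ≤ n * σ ^ 2)]
  rw [neg_div, neg_le_neg_iff, le_div_iff₀ (by positivity), ht_sq]
  nlinarith [mul_le_mul_of_nonneg_left hlinear hK]

namespace ProbabilityTheory

variable {Ω : Type*} [MeasurableSpace Ω] {P : Measure Ω}

lemma mgf_le_exp_variance_mul_of_abs_le [IsProbabilityMeasure P] {X : Ω → ℝ}
    (hX : AEMeasurable X P) {M s : ℝ} (hXM : ∀ ω, |X ω| ≤ M) (hmean : P[X] = 0)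
    (hs : 0 ≤ s) (hsM : s * M < 3) :
    mgf X P s ≤ exp (variance X P * (s ^ 2 / (2 * (1 - s * M / 3)))) := by
  set c := s ^ 2 / (2 * (1 - s * M / 3))
  have hint : Integrable X P :=
    .of_bound hX.aestronglyMeasurable M (ae_of_all _ fun ω => (hXM ω))
  have hint_sq : Integrable (fun ω => X ω ^ 2) P :=
    .of_bound (hX.pow_const 2).aestronglyMeasurable (M ^ 2) (ae_of_all _ fun ω => by
      simpa [sq_abs] using pow_le_pow_left₀ (abs_nonneg _) (hXM ω) 2)
  have hpoint (ω : Ω) : exp (s * X ω) ≤ 1 + s * X ω + X ω ^ 2 * c := by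
    have hsX : |s * X ω| ≤ s * M := by
      rw [abs_mul, abs_of_nonneg hs]; exact mul_le_mul_of_nonneg_left (hXM ω) hs
    calc exp (s * X ω) ≤ 1 + s * X ω + (s * X ω) ^ 2 / (2 * (1 - |s * X ω| / 3)) :=
          exp_le_one_add_add_sq_div (by linarith)
      _ ≤ 1 + s * X ω + X ω ^ 2 * c := by
          rw [mul_pow, mul_comm (s ^ 2), mul_div_assoc]
          unfold c
          gcongr
          linarith
  have hint_exp : Integrable (fun ω => exp (s * X ω)) P :=
    integrable_exp_mul_of_le s M hs hX (ae_of_all _ fun ω => (le_abs_self _).trans (hXM ω))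
  have hint_lin : Integrable (fun ω => 1 + s * X ω) P := (integrable_const 1).add (hint.const_mul s)
  calc mgf X P s ≤ ∫ ω, 1 + s * X ω + X ω ^ 2 * c ∂P :=
        integral_mono hint_exp (hint_lin.add (hint_sq.mul_const c)) hpoint
    _ = 1 + variance X P * c := by
        rw [integral_add hint_lin (hint_sq.mul_const c),
          integral_add (integrable_const 1) (hint.const_mul s), integral_const_mul,
          integral_mul_const, hmean, variance_of_integral_eq_zero hX hmean]
        simp
    _ ≤ exp (variance X P * c) := by linarith [add_one_le_exp (variance X P * c)]

lemma measureReal_sum_ge_le_of_iIndepFun_of_abs_le [IsProbabilityMeasure P] {ι : Type*}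
    [Fintype ι] {X : ι → Ω → ℝ} (h_indep : iIndepFun X P) (hX : ∀ i, Measurable (X i))
    {M : ℝ} (hXM : ∀ i ω, |X i ω| ≤ M) (hmean : ∀ i, P[X i] = 0)
    (hV : 0 < ∑ i, variance (X i) P) {t : ℝ} (ht : 0 ≤ t) :
    P.real {ω | t ≤ ∑ i, X i ω} ≤
      exp (-t ^ 2 / (2 * (∑ i, variance (X i) P + M * t / 3))) := by
  set V := ∑ i, variance (X i) P
  have hM : 0 ≤ M := by
    obtain ⟨i, -, -⟩ := Finset.exists_ne_zero_of_sum_ne_zero hV.ne'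
    obtain ⟨ω⟩ := nonempty_of_isProbabilityMeasure P
    exact (abs_nonneg _).trans (hXM i ω)
  have hD : 0 < V + M * t / 3 := by positivity
  -- the minimiser of the Chernoff exponent
  set s := t / (V + M * t / 3) with hs_def
  have hs : 0 ≤ s := by positivity
  have hsM : s * M < 3 := by
    rw [div_mul_eq_mul_div, div_lt_iff₀ hD]; linarith
  have hint : Integrable (fun ω => exp (s * (∑ i, X i) ω)) P :=
    integrable_exp_mul_of_le s (Fintype.card ι * M) hs (by fun_prop) (ae_of_all _ fun ω => by
      calc (∑ i, X i) ω ≤ ∑ _i : ι, M := by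
            rw [Finset.sum_apply]
            exact Finset.sum_le_sum fun i _ => (le_abs_self _).trans (hXM i ω)
        _ = Fintype.card ι * M := by simp)
  have hmgf : mgf (∑ i, X i) P s ≤ exp (V * (s ^ 2 / (2 * (1 - s * M / 3)))) := by
    rw [h_indep.mgf_sum hX, Finset.sum_mul, exp_sum]
    exact Finset.prod_le_prod (fun i _ => mgf_nonneg) fun i _ =>
      mgf_le_exp_variance_mul_of_abs_le (hX i).aemeasurable (hXM i) (hmean i) hs hsM
  have hexponent : -s * t + V * (s ^ 2 / (2 * (1 - s * M / 3))) =
      -t ^ 2 / (2 * (V + M * t / 3)) := by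
    rw [hs_def]; field_simp; ring
  calc P.real {ω | t ≤ ∑ i, X i ω} = P.real {ω | t ≤ (∑ i, X i) ω} := by
        simp only [Finset.sum_apply]
    _ ≤ exp (-s * t) * mgf (∑ i, X i) P s := measure_ge_le_exp_mul_mgf t hs hint
    _ ≤ exp (-s * t) * exp (V * (s ^ 2 / (2 * (1 - s * M / 3)))) := by gcongr
    _ = _ := by rw [← exp_add, hexponent]

lemma measureReal_abs_sum_ge_le_of_iIndepFun_of_abs_le [IsProbabilityMeasure P] {ι : Type*}
    [Fintype ι] {X : ι → Ω → ℝ} (h_indep : iIndepFun X P) (hX : ∀ i, Measurable (X i))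
    {M : ℝ} (hXM : ∀ i ω, |X i ω| ≤ M) (hmean : ∀ i, P[X i] = 0)
    (hV : 0 < ∑ i, variance (X i) P) {t : ℝ} (ht : 0 ≤ t) :
    P.real {ω | t ≤ |∑ i, X i ω|} ≤
      2 * exp (-t ^ 2 / (2 * (∑ i, variance (X i) P + M * t / 3))) := by
  have h_upper := measureReal_sum_ge_le_of_iIndepFun_of_abs_le h_indep hX hXM hmean hV ht
  have h_lower := measureReal_sum_ge_le_of_iIndepFun_of_abs_le (X := fun i => -X i)
    (h_indep.comp (fun _ => Neg.neg) fun _ => measurable_neg) (fun i => (hX i).neg)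
    (fun i ω => by simpa using hXM i ω) (fun i => by simp [integral_neg, hmean i])
    (by simpa [variance_neg] using hV) ht
  simp only [variance_neg, Pi.neg_apply, Finset.sum_neg_distrib] at h_lower
  calc P.real {ω | t ≤ |∑ i, X i ω|}
      ≤ P.real ({ω | t ≤ ∑ i, X i ω} ∪ {ω | t ≤ -∑ i, X i ω}) :=
        measureReal_mono fun ω (hω : t ≤ |_|) => le_abs.mp hω
    _ ≤ _ := (measureReal_union_le _ _).trans (by linarith)

lemma measureReal_le_abs_inv_mul_sum_sub_integral_le [IsProbabilityMeasure P] {n : ℕ}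
    (hn : 0 < n) {Z : Fin n → Ω → ℝ} {Z₀ : Ω → ℝ} (h_indep : iIndepFun Z P)
    (hZ : ∀ i, Measurable (Z i)) (hident : ∀ i, IdentDistrib (Z i) Z₀ P P)
    {M : ℝ} (hZM : ∀ i ω, |Z i ω| ≤ M) {σ : ℝ} (hσ : 0 < σ) (hvar : variance Z₀ P = σ ^ 2)
    {K : ℝ} (hK : 0 ≤ K) (hnK : 16 / 9 * K * (M ^ 2 / σ ^ 2) ≤ n) :
    P.real {ω | 2 * σ * √K / √n ≤ |(n : ℝ)⁻¹ * ∑ i, Z i ω - P[Z₀]|} ≤ 2 * exp (-K) := by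
  have hn' : (0 : ℝ) < n := Nat.cast_pos.mpr hn
  have hZint (i : Fin n) : Integrable (Z i) P :=
    .of_bound (hZ i).aestronglyMeasurable M (ae_of_all _ (hZM i))
  have hμM : |P[Z₀]| ≤ M := by
    rw [← (hident ⟨0, hn⟩).integral_eq]
    simpa using norm_integral_le_of_norm_le_const (μ := P) (C := M)
      (ae_of_all _ fun ω => (Real.norm_eq_abs _).trans_le (hZM ⟨0, hn⟩ ω))
  have hM : 0 ≤ M := (abs_nonneg _).trans hμM
  set t := 2 * σ * √(K * n) with ht_def
  have hsum_var : ∑ i, variance (fun ω => Z i ω - P[Z₀]) P = n * σ ^ 2 := by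
    simp [variance_sub_const (hZ _).aestronglyMeasurable, (hident _).variance_eq, hvar]
  have h_indep_centered : iIndepFun (fun i ω => Z i ω - P[Z₀]) P :=
    h_indep.comp _ fun _ => measurable_sub_const _
  have hbernstein := measureReal_abs_sum_ge_le_of_iIndepFun_of_abs_le (M := 2 * M) (t := t)
    h_indep_centered
    (fun i => (hZ i).sub_const _)
    (fun i ω => (abs_sub _ _).trans (by linarith [hZM i ω]))
    (fun i => by rw [integral_sub (hZint i) (integrable_const _), (hident i).integral_eq]; simp)
    (by rw [hsum_var]; positivity) (by positivity)
  rw [hsum_var] at hbernstein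
  refine (measureReal_mono fun ω hω => ?_).trans (hbernstein.trans (by
    gcongr; exact bernstein_exponent_le_neg hn' hσ hM hK hnK))
  simp only [Set.mem_ofPred_eq] at hω ⊢
  have hsum : ∑ i, (Z i ω - P[Z₀]) = n * ((n : ℝ)⁻¹ * ∑ i, Z i ω - P[Z₀]) := by
    rw [Finset.sum_sub_distrib, Finset.sum_const, Finset.card_univ, Fintype.card_fin, nsmul_eq_mul]
    field_simp
  have ht_eq : t = n * (2 * σ * √K / √n) := by
    rw [ht_def, sqrt_mul hK]; field_simp; rw [sq_sqrt hn'.le]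
  rw [hsum, abs_mul, abs_of_pos hn', ht_eq]
  gcongr

lemma measureReal_not_abs_inv_mul_sum_sub_div_le_le [IsProbabilityMeasure P] {n : ℕ}
    (hn : 0 < n) {Z : Fin n → Ω → ℝ} {Z₀ : Ω → ℝ} (h_indep : iIndepFun Z P)
    (hZ : ∀ i, Measurable (Z i)) (hident : ∀ i, IdentDistrib (Z i) Z₀ P P)
    {M : ℝ} (hZM : ∀ i ω, |Z i ω| ≤ M) {σ : ℝ} (hσ : 0 < σ) (hvar : variance Z₀ P = σ ^ 2)
    {b : ℝ} (hbias : |P[Z₀] - b| ≤ σ / √n)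
    {K : ℝ} (hK : 0 ≤ K) (hnK : 16 / 9 * K * (M ^ 2 / σ ^ 2) ≤ n) :
    P.real {ω | ¬ |(n : ℝ)⁻¹ * ∑ i, Z i ω - b| / σ ≤ (2 * √K + 1) / √n} ≤ 2 * exp (-K) := by
  refine (measureReal_mono fun ω hω => ?_).trans
    (measureReal_le_abs_inv_mul_sum_sub_integral_le hn h_indep hZ hident hZM hσ hvar hK hnK)
  simp only [Set.mem_ofPred_eq] at hω ⊢
  by_contra! hlt
  apply hω
  calc |(n : ℝ)⁻¹ * ∑ i, Z i ω - b| / σ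
      ≤ (|(n : ℝ)⁻¹ * ∑ i, Z i ω - P[Z₀]| + |P[Z₀] - b|) / σ := by
        gcongr; exact abs_sub_le _ _ _
    _ ≤ (2 * σ * √K / √n + σ / √n) / σ := by gcongr
    _ = (2 * √K + 1) / √n := by field_simp

lemma one_sub_card_mul_le_measureReal_forall [IsProbabilityMeasure P] {ι : Type*} [Fintype ι]
    {Q : ι → Ω → Prop} {ε : ℝ} (h : ∀ k, P.real {ω | ¬ Q k ω} ≤ ε) :
    1 - Fintype.card ι * ε ≤ P.real {ω | ∀ k, Q k ω} := by
  have hcompl : {ω | ∀ k, Q k ω}ᶜ = ⋃ k, {ω | ¬ Q k ω} := by ext; simp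
  have hunion := measureReal_union_le (μ := P) {ω | ∀ k, Q k ω} {ω | ∀ k, Q k ω}ᶜ
  rw [Set.union_compl_self, probReal_univ, hcompl] at hunion
  have hsum : ∑ k, P.real {ω | ¬ Q k ω} ≤ Fintype.card ι * ε := by
    simpa using Finset.sum_le_sum fun k (_ : k ∈ Finset.univ) => h k
  linarith [measureReal_iUnion_fintype_le (μ := P) fun k => {ω | ¬ Q k ω}]

end ProbabilityTheory

/-- **Large deviation bound \fr{large_dev}.**  If `n ≥ N0`, then with probability at least
`1 - 2 p^{-τ}` one has `max_k |ξ_k - b_k| / σ_k ≤ (2 √((τ+1) log p) + 1)/√n`. -/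
theorem large_deviation_xi
    {Ω : Type*} [MeasurableSpace Ω] (P : Measure Ω) [IsProbabilityMeasure P]
    (p n : ℕ) (hp : 2 ≤ p) (hn : 1 ≤ n)
    (φ : Fin p → Lp2) (f : Lp2)
    -- `Y, Y_1, …, Y_n` i.i.d. ℕ-valued random variables
    (Y : Ω → ℕ) (Yi : Fin n → Ω → ℕ)
    (hYmeas : Measurable Y) (hYimeas : ∀ i, Measurable (Yi i))
    (hindep : iIndepFun Yi P)
    (hident : ∀ i, P.map (Yi i) = P.map Y)
    -- the functions `ψ_k`, bounded, with positive variances `σ_k²` and bias at most `σ_k/√n`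
    (ψ : Fin p → ℕ → ℝ) (σ : Fin p → ℝ)
    (hψbdd : ∀ k, BddAbove (Set.range fun m => |ψ k m|))
    (hσpos : ∀ k, 0 < σ k)
    (hvar : ∀ k, variance (fun ω => ψ k (Y ω)) P = (σ k) ^ 2)
    (hbias : ∀ k, |(∫ ω, ψ k (Y ω) ∂P) - ⟪f, φ k⟫| ≤ σ k / Real.sqrt n)
    (τ : ℝ) (hτ : 0 < τ)
    -- `n ≥ N0`
    (hN0 : (16 / 9) * (τ + 1) * Real.log p *
        (⨆ k : Fin p, (⨆ m : ℕ, |ψ k m|) ^ 2 / (σ k) ^ 2) ≤ (n : ℝ)) :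
    ENNReal.ofReal (1 - 2 * (p : ℝ) ^ (-τ)) ≤
      P {ω | ∀ k : Fin p,
        |((n : ℝ)⁻¹ * ∑ i, ψ k (Yi i ω)) - ⟪f, φ k⟫| / σ k
          ≤ (2 * Real.sqrt ((τ + 1) * Real.log p) + 1) / Real.sqrt n} := by
  have hp₀ : (0 : ℝ) < p := Nat.cast_pos.mpr (by omega)
  set K := (τ + 1) * log p with hK_def
  have hK : 0 ≤ K := mul_nonneg (by linarith) (log_natCast_nonneg p)
  have hdev (k : Fin p) : P.real {ω | ¬ |(n : ℝ)⁻¹ * ∑ i, ψ k (Yi i ω) - ⟪f, φ k⟫| / σ k ≤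
      (2 * √K + 1) / √n} ≤ 2 * exp (-K) := by
    have hnK : 16 / 9 * K * ((⨆ m, |ψ k m|) ^ 2 / σ k ^ 2) ≤ n := by
      refine le_trans ?_ hN0
      rw [hK_def, ← mul_assoc]
      gcongr
      exact le_ciSup (f := fun k => (⨆ m, |ψ k m|) ^ 2 / σ k ^ 2) (Set.finite_range _).bddAbove k
    exact measureReal_not_abs_inv_mul_sum_sub_div_le_le hn
      (hindep.comp _ fun _ => measurable_of_countable (ψ k))
      (fun i => (measurable_of_countable (ψ k)).comp (hYimeas i))
      (fun i => IdentDistrib.comp ⟨(hYimeas i).aemeasurable, hYmeas.aemeasurable, hident i⟩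
        (measurable_of_countable (ψ k)))
      (fun _ _ => le_ciSup (hψbdd k) _) (hσpos k) (hvar k) (hbias k) hK hnK
  have hpow : (p : ℝ) ^ (-τ) = p * exp (-K) := by
    rw [rpow_def_of_pos hp₀, hK_def]
    nth_rewrite 2 [← exp_log hp₀]
    rw [← exp_add]; ring_nf
  calc ENNReal.ofReal (1 - 2 * (p : ℝ) ^ (-τ))
      = ENNReal.ofReal (1 - Fintype.card (Fin p) * (2 * exp (-K))) := by
        rw [hpow, Fintype.card_fin]; ring_nf
    _ ≤ ENNReal.ofReal (P.real _) :=
        ENNReal.ofReal_le_ofReal (ProbabilityTheory.one_sub_card_mul_le_measureReal_forall hdev)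
    _ = _ := ofReal_measureReal
end
end

section
/- Let f : ℕ → ℝ be bounded. Then for every j ∈ ℕ, ∫₀^∞ (e^{−λ} λ^j / j!) · ( Σ_{l=0}^∞ (e^{−λ} λ^l / l!) f(l) ) dλ = Σ_{l=0}^∞ binom(j+l, l) · 2^{−(j+l+1)} · f(l), where both the inner series and the right-hand series converge absolutely. -/
/-!
With `p_l(x) = e^{-x} x^l / l!`, the product `p_j p_l` is `x^{j+l} e^{-2x} / (j! l!)`, whose
integral over `(0, ∞)` is `(j+l)! / (j! l! 2^{j+l+1})` by the Gamma integral. Since `f` is bounded,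
these integrals times `|f l|` are dominated by a negative binomial series in `1/2`, so the sum over
`l` may be taken out of the integral.
-/

open MeasureTheory Real Set
open scoped Nat

lemma integral_pow_mul_exp_neg_mul_Ioi {r : ℝ} (hr : 0 < r) (n : ℕ) :
    ∫ x in Ioi (0 : ℝ), x ^ n * exp (-(r * x)) = n ! / r ^ (n + 1) := by
  have h := integral_rpow_mul_exp_neg_mul_Ioi (a := n + 1) (by positivity) hr
  rw [add_sub_cancel_right, Gamma_nat_eq_factorial, ← Nat.cast_succ, rpow_natCast] at h
  simp_rw [rpow_natCast] at h
  rw [h, one_div, inv_pow, inv_mul_eq_div]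

lemma integrableOn_pow_mul_exp_neg_mul_Ioi {r : ℝ} (hr : 0 < r) (n : ℕ) :
    IntegrableOn (fun x : ℝ ↦ x ^ n * exp (-(r * x))) (Ioi 0) :=
  .of_integral_ne_zero (by rw [integral_pow_mul_exp_neg_mul_Ioi hr]; positivity)

noncomputable def poissonWeight (l : ℕ) (x : ℝ) : ℝ := exp (-x) * x ^ l / l !

lemma poissonWeight_nonneg (l : ℕ) {x : ℝ} (hx : 0 ≤ x) : 0 ≤ poissonWeight l x := by
  unfold poissonWeight; positivity

lemma summable_abs_poissonWeight (x : ℝ) : Summable fun l ↦ |poissonWeight l x| := by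
  refine summable_abs_iff.mpr ?_
  simpa only [poissonWeight, mul_div_assoc] using
    (summable_pow_div_factorial x).mul_left (exp (-x))

lemma poissonWeight_mul_poissonWeight (j l : ℕ) (x : ℝ) :
    poissonWeight j x * poissonWeight l x = (j ! * l ! : ℝ)⁻¹ * (x ^ (j + l) * exp (-(2 * x))) := by
  have h : exp (-(2 * x)) = exp (-x) * exp (-x) := by rw [← exp_add]; ring_nf
  simp only [poissonWeight, h]
  field_simp
  ring

lemma integrableOn_poissonWeight_mul (j l : ℕ) :
    IntegrableOn (fun x ↦ poissonWeight j x * poissonWeight l x) (Ioi 0) := by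
  simp_rw [poissonWeight_mul_poissonWeight]
  exact (integrableOn_pow_mul_exp_neg_mul_Ioi two_pos _).const_mul _

lemma integral_poissonWeight_mul (j l : ℕ) :
    ∫ x in Ioi (0 : ℝ), poissonWeight j x * poissonWeight l x
      = ((j + l).choose l : ℝ) * (2 : ℝ) ^ (-(j + l + 1 : ℤ)) := by
  simp_rw [poissonWeight_mul_poissonWeight]
  rw [integral_const_mul, integral_pow_mul_exp_neg_mul_Ioi two_pos,
    Nat.cast_choose ℝ (Nat.le_add_left l j), Nat.add_sub_cancel, zpow_neg]
  norm_cast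
  field_simp
  push_cast
  ring

lemma summable_choose_mul_two_zpow (j : ℕ) :
    Summable fun l : ℕ ↦ ((j + l).choose l : ℝ) * (2 : ℝ) ^ (-(j + l + 1 : ℤ)) := by
  have h := (summable_choose_mul_geometric_of_norm_lt_one j (r := (2⁻¹ : ℝ))
    (by norm_num)).mul_left ((2 : ℝ) ^ (-(j + 1 : ℤ)))
  refine h.congr fun l ↦ ?_
  rw [add_comm l j, Nat.choose_symm_add, ← zpow_natCast, inv_zpow', mul_left_comm,
    ← zpow_add₀ two_ne_zero]
  ring_nf

lemma summable_abs_mul_of_abs_le {ι : Type*} {w f : ι → ℝ} {C : ℝ} (hw : Summable fun l ↦ |w l|)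
    (hf : ∀ l, |f l| ≤ C) : Summable fun l ↦ |w l * f l| :=
  (hw.mul_right C).of_nonneg_of_le (fun _ ↦ abs_nonneg _)
    fun l ↦ (abs_mul _ _).trans_le (mul_le_mul_of_nonneg_left (hf l) (abs_nonneg _))

lemma integral_poissonWeight_mul_tsum (j : ℕ) {a : ℕ → ℝ}
    (ha : Summable fun l : ℕ ↦ |((j + l).choose l : ℝ) * (2 : ℝ) ^ (-(j + l + 1 : ℤ)) * a l|) :
    ∫ x in Ioi (0 : ℝ), poissonWeight j x * ∑' l, poissonWeight l x * a l
      = ∑' l : ℕ, ((j + l).choose l : ℝ) * (2 : ℝ) ^ (-(j + l + 1 : ℤ)) * a l := by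
  set F : ℕ → ℝ → ℝ := fun l x ↦ poissonWeight j x * (poissonWeight l x * a l)
  have integral_F (l : ℕ) : ∫ x in Ioi (0 : ℝ), F l x
      = ((j + l).choose l : ℝ) * (2 : ℝ) ^ (-(j + l + 1 : ℤ)) * a l := by
    simp only [F, ← mul_assoc, integral_mul_const, integral_poissonWeight_mul]
  have integral_norm_F (l : ℕ) : ∫ x in Ioi (0 : ℝ), ‖F l x‖
      = |((j + l).choose l : ℝ) * (2 : ℝ) ^ (-(j + l + 1 : ℤ)) * a l| := by
    rw [abs_mul, abs_of_nonneg (by positivity), ← integral_poissonWeight_mul, ← integral_mul_const]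
    refine setIntegral_congr_fun measurableSet_Ioi fun x hx ↦ ?_
    simp only [F, norm_mul, Real.norm_eq_abs, abs_of_nonneg (poissonWeight_nonneg _ hx.le),
      mul_assoc]
  have integrable_F (l : ℕ) : Integrable (F l) (volume.restrict (Ioi 0)) := by
    simpa only [F, mul_assoc] using (integrableOn_poissonWeight_mul j l).mul_const (a l)
  calc ∫ x in Ioi (0 : ℝ), poissonWeight j x * ∑' l, poissonWeight l x * a l
      = ∫ x in Ioi (0 : ℝ), ∑' l, F l x := by simp only [F, tsum_mul_left]
    _ = ∑' l, ∫ x in Ioi (0 : ℝ), F l x :=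
      (integral_tsum_of_summable_integral_norm integrable_F
        (by simpa only [integral_norm_F] using ha)).symm
    _ = _ := tsum_congr integral_F

/-- **The identity defining `Q Q*`.**  For bounded `f : ℕ → ℝ` and every `j ∈ ℕ`,
`∫₀^∞ (e^{-λ} λ^j/j!) (∑_l (e^{-λ} λ^l/l!) f(l)) dλ = ∑_l C(j+l, l) 2^{-(j+l+1)} f(l)`,
where both the inner series (for every `λ > 0`) and the right-hand series converge
absolutely. -/
theorem QQstar_identity
    (f : ℕ → ℝ) (hf : ∃ C : ℝ, ∀ l, |f l| ≤ C) (j : ℕ) :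
    (∀ x ∈ Set.Ioi (0:ℝ),
      Summable fun l : ℕ => |Real.exp (-x) * x ^ l / (Nat.factorial l) * f l|) ∧
    (Summable fun l : ℕ =>
      |((j + l).choose l : ℝ) * (2:ℝ) ^ (-(j + l + 1 : ℤ)) * f l|) ∧
    (∫ x in Set.Ioi (0:ℝ),
        Real.exp (-x) * x ^ j / (Nat.factorial j) *
          ∑' l : ℕ, Real.exp (-x) * x ^ l / (Nat.factorial l) * f l)
      = ∑' l : ℕ, ((j + l).choose l : ℝ) * (2:ℝ) ^ (-(j + l + 1 : ℤ)) * f l := by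
  obtain ⟨C, hC⟩ := hf
  have summable_rhs := summable_abs_mul_of_abs_le
    (summable_abs_iff.mpr (summable_choose_mul_two_zpow j)) hC
  exact ⟨fun x _ ↦ summable_abs_mul_of_abs_le (summable_abs_poissonWeight x) hC,
    summable_rhs, integral_poissonWeight_mul_tsum j summable_rhs⟩
end
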